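/- arXiv:math/9404212 — 5 statements merged into one kernel-verified Lean document; each statement's English description precedes it below -/
import Mathlib

section
/- For every x in R^n and every real k > 0, (x_1^2 + ... + x_n^2)^k = (Γ((n+2k)/2) / (2 π^{(n-1)/2} Γ((2k+1)/2))) · ∫_{S^{n-1}} |⟨x,ξ⟩|^{2k} dξ, where the integral is with respect to the surface measure on the unit sphere S^{n-1} in R^n. -/
/-!
Compute the Gaussian moment `∫ |⟪x, y⟫| ^ q * exp (-‖y‖ ^ 2) dy` over `ℝⁿ` in two ways. In polar
coordinates it is the sphere integral times the radial factor `Γ((n + q) / 2) / 2`. A reflection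
taking `‖x‖ • e₀` to `x` turns the integrand into `‖x‖ ^ q * |y₀| ^ q * exp (-‖y‖ ^ 2)`, which
factors over the coordinates into `‖x‖ ^ q * Γ((q + 1) / 2) * π ^ ((n - 1) / 2)`.
-/

open MeasureTheory Real Set Metric
open scoped RealInnerProductSpace

section Polar

variable {E F : Type*} [NormedAddCommGroup E] [NormedSpace ℝ E] [FiniteDimensional ℝ E]
  [MeasurableSpace E] [BorelSpace E] [NormedAddCommGroup F] [NormedSpace ℝ F]

theorem MeasureTheory.integral_eq_integral_sphere_prod_Ioi [Nontrivial E] (μ : Measure E)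
    [μ.IsAddHaarMeasure] (g : E → F) :
    ∫ y, g y ∂μ = ∫ p : sphere (0 : E) 1 × Ioi (0 : ℝ), g ((p.2 : ℝ) • (p.1 : E))
      ∂(μ.toSphere.prod (Measure.volumeIoiPow (Module.finrank ℝ E - 1))) := by
  calc ∫ y, g y ∂μ = ∫ y : ({0}ᶜ : Set E), g y ∂(μ.comap (↑)) := by
        rw [integral_subtype_comap (measurableSet_singleton _).compl, restrict_compl_singleton]
    _ = _ := by
        rw [← μ.measurePreserving_homeomorphUnitSphereProd.integral_comp
          (Homeomorph.measurableEmbedding _)]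
        congr with y
        simp [smul_inv_smul₀ (norm_ne_zero_iff.2 y.2)]

theorem MeasureTheory.Measure.integral_volumeIoiPow (m : ℕ) (f : ℝ → F) :
    ∫ r, f r ∂(volumeIoiPow m) = ∫ r in Ioi (0 : ℝ), r ^ m • f r := by
  simp only [volumeIoiPow, ENNReal.ofReal]
  rw [integral_withDensity_eq_integral_smul (measurable_subtype_coe.pow_const _).real_toNNReal,
    integral_subtype_comap measurableSet_Ioi fun r ↦ (r ^ m).toNNReal • f r]
  refine setIntegral_congr_fun measurableSet_Ioi fun r hr ↦ ?_
  rw [NNReal.smul_def, Real.coe_toNNReal _ (pow_nonneg hr.out.le _)]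

end Polar

theorem integral_Ioi_rpow_mul_exp_neg_sq {q : ℝ} (hq : -1 < q) :
    ∫ r in Ioi (0 : ℝ), r ^ q * exp (-r ^ 2) = Gamma ((q + 1) / 2) / 2 := by
  have := integral_rpow_mul_exp_neg_rpow zero_lt_two hq
  simp_rw [rpow_two] at this
  rw [this]
  ring

theorem integral_abs_rpow_mul_exp_neg_sq {q : ℝ} (hq : -1 < q) :
    ∫ t : ℝ, |t| ^ q * exp (-t ^ 2) = Gamma ((q + 1) / 2) := by
  have h (t : ℝ) : |t| ^ q * exp (-t ^ 2) = |t| ^ q * exp (-|t| ^ 2) := by rw [sq_abs]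
  simp only [h]
  rw [integral_comp_abs (f := fun s ↦ s ^ q * exp (-s ^ 2)), integral_Ioi_rpow_mul_exp_neg_sq hq]
  ring

theorem MeasureTheory.Measure.integral_volumeIoiPow_rpow_mul_exp_neg_sq (m : ℕ) {q : ℝ}
    (hq : -1 < m + q) :
    ∫ r, (r : ℝ) ^ q * exp (-(r : ℝ) ^ 2) ∂(volumeIoiPow m) = Gamma ((m + q + 1) / 2) / 2 := by
  rw [integral_volumeIoiPow m fun r ↦ r ^ q * exp (-r ^ 2), ← integral_Ioi_rpow_mul_exp_neg_sq hq]
  refine setIntegral_congr_fun measurableSet_Ioi fun r hr ↦ ?_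
  rw [smul_eq_mul, rpow_add hr, rpow_natCast, mul_assoc]

theorem EuclideanSpace.integral_abs_apply_rpow_mul_exp_neg_norm_sq {ι : Type*} [Fintype ι]
    (i : ι) {q : ℝ} (hq : -1 < q) :
    ∫ y : EuclideanSpace ℝ ι, |y i| ^ q * exp (-‖y‖ ^ 2) =
      Gamma ((q + 1) / 2) * π ^ ((Fintype.card ι - 1 : ℝ) / 2) := by
  classical
  let f : ι → ℝ → ℝ := fun j t ↦ (if j = i then |t| ^ q else 1) * exp (-t ^ 2)
  have hprod (y : ι → ℝ) : |y i| ^ q * exp (-‖WithLp.toLp 2 y‖ ^ 2) = ∏ j, f j (y j) := by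
    rw [Finset.prod_mul_distrib, Finset.prod_ite_eq' Finset.univ i, ← exp_sum,
      EuclideanSpace.real_norm_sq_eq]
    simp
  have hfactor (j : ι) : ∫ t, f j t = if j = i then Gamma ((q + 1) / 2) else √π := by
    split_ifs with h
    · simp [f, h, integral_abs_rpow_mul_exp_neg_sq hq]
    · simpa [f, h] using integral_gaussian 1
  rw [← (PiLp.volume_preserving_toLp ι).integral_comp
    (MeasurableEquiv.toLp 2 _).measurableEmbedding]
  simp only [hprod]
  rw [integral_fintype_prod_volume_eq_prod]
  simp only [hfactor]
  rw [← Finset.mul_prod_erase _ _ (Finset.mem_univ i), if_pos rfl,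
    Finset.prod_congr rfl fun j hj ↦ if_neg (Finset.ne_of_mem_erase hj), Finset.prod_const,
    Finset.card_erase_of_mem (Finset.mem_univ i), Finset.card_univ, sqrt_eq_rpow, ← rpow_natCast,
    ← rpow_mul pi_pos.le, Nat.cast_sub (Fintype.card_pos_iff.2 ⟨i⟩)]
  ring_nf

theorem integral_comp_inner_norm_eq_of_norm_eq_one {E F : Type*} [NormedAddCommGroup E]
    [InnerProductSpace ℝ E] [FiniteDimensional ℝ E] [MeasurableSpace E] [BorelSpace E]
    [NormedAddCommGroup F] [NormedSpace ℝ F] (f : ℝ → ℝ → F) (x : E) {e : E} (he : ‖e‖ = 1) :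
    ∫ y, f ⟪x, y⟫ ‖y‖ = ∫ y, f (‖x‖ * ⟪e, y⟫) ‖y‖ := by
  have hnorm : ‖‖x‖ • e‖ = ‖x‖ := by simp [norm_smul, he]
  let T := (ℝ ∙ (‖x‖ • e - x))ᗮ.reflection
  have hT : T (‖x‖ • e) = x := Submodule.reflection_sub hnorm
  rw [← T.measurePreserving.integral_comp T.toHomeomorph.measurableEmbedding]
  congr with y
  have hinner : ⟪x, T y⟫ = ‖x‖ * ⟪e, y⟫ := by
    conv_lhs => rw [← hT]
    rw [T.inner_map_map, real_inner_smul_left]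
  rw [hinner, T.norm_map]

theorem EuclideanSpace.integral_abs_inner_rpow_mul_exp_neg_norm_sq {ι : Type*} [Fintype ι]
    [Nonempty ι] (x : EuclideanSpace ℝ ι) {q : ℝ} (hq : -1 < q) :
    ∫ y, |⟪x, y⟫| ^ q * exp (-‖y‖ ^ 2) =
      ‖x‖ ^ q * (Gamma ((q + 1) / 2) * π ^ ((Fintype.card ι - 1 : ℝ) / 2)) := by
  classical
  obtain ⟨i⟩ := ‹Nonempty ι›
  rw [integral_comp_inner_norm_eq_of_norm_eq_one (fun s r ↦ |s| ^ q * exp (-r ^ 2)) x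
      (by simp : ‖EuclideanSpace.single i (1 : ℝ)‖ = 1),
    ← EuclideanSpace.integral_abs_apply_rpow_mul_exp_neg_norm_sq i hq, ← integral_const_mul]
  congr with y
  simp only [EuclideanSpace.inner_single_left, map_one, one_mul, abs_mul, abs_norm]
  rw [mul_rpow (norm_nonneg x) (abs_nonneg _), mul_assoc]

theorem EuclideanSpace.integral_sphere_abs_inner_rpow {ι : Type*} [Fintype ι] [Nonempty ι]
    (x : EuclideanSpace ℝ ι) {q : ℝ} (hq : -1 < q) :
    ∫ ξ : sphere (0 : EuclideanSpace ℝ ι) 1, |⟪x, (ξ : EuclideanSpace ℝ ι)⟫| ^ q ∂volume.toSphere =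
      2 * π ^ ((Fintype.card ι - 1 : ℝ) / 2) * Gamma ((q + 1) / 2) /
        Gamma ((Fintype.card ι + q) / 2) * ‖x‖ ^ q := by
  have hpolar : ∫ y, |⟪x, y⟫| ^ q * exp (-‖y‖ ^ 2) =
      (∫ ξ : sphere (0 : EuclideanSpace ℝ ι) 1, |⟪x, (ξ : EuclideanSpace ℝ ι)⟫| ^ q
        ∂volume.toSphere) * (Gamma ((Fintype.card ι + q) / 2) / 2) := by
    rw [integral_eq_integral_sphere_prod_Ioi volume, finrank_euclideanSpace]
    calc _ = ∫ p : sphere (0 : EuclideanSpace ℝ ι) 1 × Ioi (0 : ℝ),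
            |⟪x, (p.1 : EuclideanSpace ℝ ι)⟫| ^ q * ((p.2 : ℝ) ^ q * exp (-(p.2 : ℝ) ^ 2))
            ∂(volume.toSphere.prod (Measure.volumeIoiPow (Fintype.card ι - 1))) := by
          congr with ⟨ξ, r, hr⟩
          have hξ : ‖(ξ : EuclideanSpace ℝ ι)‖ = 1 := by simp
          rw [real_inner_smul_right, norm_smul, hξ, mul_one, abs_mul, norm_of_nonneg hr.out.le,
            abs_of_pos hr, mul_rpow hr.out.le (abs_nonneg _)]
          ring
      _ = _ := by
          have hm : -1 < ((Fintype.card ι - 1 : ℕ) : ℝ) + q := by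
            linarith [(Fintype.card ι - 1).cast_nonneg (α := ℝ)]
          rw [integral_prod_mul (fun ξ : sphere (0 : EuclideanSpace ℝ ι) 1 ↦
              |⟪x, (ξ : EuclideanSpace ℝ ι)⟫| ^ q) fun r : Ioi (0 : ℝ) ↦
              (r : ℝ) ^ q * exp (-(r : ℝ) ^ 2),
            Measure.integral_volumeIoiPow_rpow_mul_exp_neg_sq _ hm, Nat.cast_sub Fintype.card_pos]
          ring_nf
  have hΓ : 0 < Gamma ((Fintype.card ι + q) / 2) :=
    Gamma_pos_of_pos (by linarith [Nat.one_le_cast (α := ℝ).2 (Fintype.card_pos (α := ι))])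
  rw [EuclideanSpace.integral_abs_inner_rpow_mul_exp_neg_norm_sq x hq] at hpolar
  field_simp
  linear_combination (-2 : ℝ) * hpolar

theorem stmt0 (n : ℕ) (hn : 1 ≤ n) (x : EuclideanSpace ℝ (Fin n)) (k : ℝ) (hk : 0 < k) :
    (∑ i, x i ^ 2) ^ k =
      Real.Gamma ((n + 2 * k) / 2) / (2 * Real.pi ^ ((n - 1 : ℝ) / 2) * Real.Gamma ((2 * k + 1) / 2)) *
        ∫ ξ : Metric.sphere (0 : EuclideanSpace ℝ (Fin n)) 1,
          |⟪x, (ξ : EuclideanSpace ℝ (Fin n))⟫| ^ (2 * k) ∂(volume.toSphere) := by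
  have : Nonempty (Fin n) := ⟨⟨0, hn⟩⟩
  rw [EuclideanSpace.integral_sphere_abs_inner_rpow x (by linarith), Fintype.card_fin,
    ← EuclideanSpace.real_norm_sq_eq, ← rpow_natCast, ← rpow_mul (norm_nonneg x)]
  have hΓ₁ : 0 < Gamma ((n + 2 * k) / 2) := Gamma_pos_of_pos (by positivity)
  have hΓ₂ : 0 < Gamma ((2 * k + 1) / 2) := Gamma_pos_of_pos (by positivity)
  have hπ : 0 < π ^ ((n - 1 : ℝ) / 2) := rpow_pos_of_pos pi_pos _
  field_simp
  rw [Nat.cast_ofNat, mul_comm]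
end

section
/- For every x on the unit sphere S^{n-1} in R^n, x_n^2 = (Γ((n+1)/2) / (2 π^{(n-1)/2})) · ∫_{S^{n-1}} |⟨x,ξ⟩| · ( (n+1) ξ_n^2 − 1 ) dξ. -/
open MeasureTheory Real Finset
open scoped RealInnerProductSpace

/-!
Integrate `y ↦ |⟪x, y⟫| * ((n + 1) * y_n ^ 2 - ‖y‖ ^ 2) * exp (-‖y‖ ^ 2)` over `ℝⁿ` in two ways.
In polar coordinates the integrand is `r ^ 3 * exp (-r ^ 2)` times the spherical integrand, so the
integral is `Γ((n + 3) / 2) / 2` times the spherical integral. In coordinates `z` with respect to an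
orthonormal basis whose `N`-th vector is `x`, it is `|z_N|` times a quadratic form in `z` times a product of
one-dimensional Gaussians; Fubini reduces it to the moments `∫ |u| ^ a * u ^ b * exp (-u ^ 2)`,
and the weight `n + 1` is exactly the one for which only the term `⟪x, e_n⟫ ^ 2 = x_n ^ 2` survives.
-/

theorem Real.Gamma_three_div_two : Gamma (3 / 2) = √π / 2 := by
  rw [show (3 : ℝ) / 2 = 1 / 2 + 1 by norm_num, Gamma_add_one (by norm_num), Gamma_one_half_eq]
  ring

theorem integral_Ioi_pow_mul_exp_neg_sq (k : ℕ) :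
    ∫ x in Set.Ioi (0 : ℝ), x ^ k * exp (-x ^ 2) = Gamma ((k + 1) / 2) / 2 := by
  have h := integral_rpow_mul_exp_neg_rpow (p := 2) (q := k) two_pos
    (neg_one_lt_zero.trans_le k.cast_nonneg)
  simp only [rpow_natCast, rpow_ofNat] at h
  rw [h]
  ring

theorem integrable_abs_pow_mul_pow_mul_exp_neg_sq (a b : ℕ) :
    Integrable fun u : ℝ => |u| ^ a * u ^ b * exp (-u ^ 2) := by
  have h := integrable_rpow_mul_exp_neg_mul_sq one_pos
    (neg_one_lt_zero.trans_le (a + b).cast_nonneg)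
  simp only [rpow_natCast, neg_mul, one_mul] at h
  refine h.norm.mono' (by fun_prop) (.of_forall fun u => le_of_eq ?_)
  simp [pow_add]

theorem integral_abs_pow_mul_pow_mul_exp_neg_sq_of_even (a : ℕ) {b : ℕ} (hb : Even b) :
    ∫ u : ℝ, |u| ^ a * u ^ b * exp (-u ^ 2) = Gamma ((a + b + 1) / 2) := by
  have h (u : ℝ) : |u| ^ a * u ^ b * exp (-u ^ 2) = |u| ^ (a + b) * exp (-|u| ^ 2) := by
    rw [pow_add, hb.pow_abs, sq_abs]
  simp_rw [h]
  rw [integral_comp_abs (f := fun t => t ^ (a + b) * exp (-t ^ 2)),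
    integral_Ioi_pow_mul_exp_neg_sq]
  push_cast
  ring

theorem integral_abs_pow_mul_pow_mul_exp_neg_sq_of_odd (a : ℕ) {b : ℕ} (hb : Odd b) :
    ∫ u : ℝ, |u| ^ a * u ^ b * exp (-u ^ 2) = 0 := by
  have h := integral_neg_eq_self (fun u : ℝ => |u| ^ a * u ^ b * exp (-u ^ 2)) volume
  simp only [abs_neg, hb.neg_pow, neg_sq, neg_mul, mul_neg, integral_neg] at h
  linarith

section GaussianMoments

variable {ι : Type*} [Fintype ι] [DecidableEq ι]

noncomputable def gaussianMomentFactor (N i j k : ι) (u : ℝ) : ℝ :=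
  |u| ^ (if k = N then 1 else 0) * u ^ ((if k = i then 1 else 0) + (if k = j then 1 else 0)) *
    exp (-u ^ 2)

theorem abs_mul_mul_mul_exp_neg_sum_sq_eq_prod (N i j : ι) (w : ι → ℝ) :
    |w N| * (w i * w j) * exp (-∑ k, w k ^ 2) = ∏ k, gaussianMomentFactor N i j k (w k) := by
  simp only [gaussianMomentFactor, prod_mul_distrib, pow_add, pow_ite, pow_one, pow_zero,
    prod_ite_eq', mem_univ, if_true, ← exp_sum, sum_neg_distrib]

theorem integrable_abs_mul_mul_mul_exp_neg_sum_sq (N i j : ι) :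
    Integrable fun w : ι → ℝ => |w N| * (w i * w j) * exp (-∑ k, w k ^ 2) := by
  simp_rw [abs_mul_mul_mul_exp_neg_sum_sq_eq_prod N i j]
  exact Integrable.fintype_prod fun k => integrable_abs_pow_mul_pow_mul_exp_neg_sq _ _

theorem integral_abs_mul_mul_mul_exp_neg_sum_sq (N i j : ι) :
    ∫ w : ι → ℝ, |w N| * (w i * w j) * exp (-∑ k, w k ^ 2) =
      if i = j then (if i = N then 1 else 1 / 2) * √π ^ (Fintype.card ι - 1) else 0 := by
  simp_rw [abs_mul_mul_mul_exp_neg_sum_sq_eq_prod N i j]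
  rw [integral_fintype_prod_volume_eq_prod]
  have hcard : Fintype.card ι ≠ 0 := (Fintype.card_pos_iff.2 ⟨N⟩).ne'
  have hπ : √π ≠ 0 := by positivity
  split_ifs with hij hiN
  · subst hij hiN
    have h (k : ι) : ∫ u, gaussianMomentFactor i i i k u = √π * if k = i then (√π)⁻¹ else 1 := by
      unfold gaussianMomentFactor
      rw [integral_abs_pow_mul_pow_mul_exp_neg_sq_of_even _ (by split_ifs <;> decide)]
      split_ifs <;> norm_num [Gamma_one_half_eq, hπ]
    rw [prod_congr rfl fun k _ => h k, prod_mul_distrib, prod_const, prod_ite_eq',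
      if_pos (mem_univ _), card_univ, ← pow_sub_one_mul hcard]
    field_simp
  · subst hij
    have h (k : ι) : ∫ u, gaussianMomentFactor N i i k u =
        √π * (if k = N then (√π)⁻¹ else 1) * if k = i then 2⁻¹ else 1 := by
      unfold gaussianMomentFactor
      rw [integral_abs_pow_mul_pow_mul_exp_neg_sq_of_even _ (by split_ifs <;> decide)]
      rcases eq_or_ne k N with rfl | hkN
      · norm_num [Ne.symm hiN, hπ]
      rcases eq_or_ne k i with rfl | hki
      · norm_num [hkN, Gamma_three_div_two]
        ring
      · norm_num [hkN, hki, Gamma_one_half_eq]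
    rw [prod_congr rfl fun k _ => h k, prod_mul_distrib, prod_mul_distrib, prod_const,
      prod_ite_eq', prod_ite_eq', if_pos (mem_univ _), if_pos (mem_univ _), card_univ,
      ← pow_sub_one_mul hcard]
    field_simp
  · refine prod_eq_zero (mem_univ i) ?_
    unfold gaussianMomentFactor
    rw [integral_abs_pow_mul_pow_mul_exp_neg_sq_of_odd _ (by simp [hij])]

theorem integral_abs_mul_quadratic_mul_exp_neg_sum_sq (N : ι) (A : Matrix ι ι ℝ) :
    ∫ w : ι → ℝ, |w N| * (∑ i, ∑ j, A i j * (w i * w j)) * exp (-∑ k, w k ^ 2) =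
      (A.trace + A N N) / 2 * √π ^ (Fintype.card ι - 1) := by
  have hint (i j : ι) := (integrable_abs_mul_mul_mul_exp_neg_sum_sq N i j).const_mul (A i j)
  have hexpand (w : ι → ℝ) : |w N| * (∑ i, ∑ j, A i j * (w i * w j)) * exp (-∑ k, w k ^ 2) =
      ∑ i, ∑ j, A i j * (|w N| * (w i * w j) * exp (-∑ k, w k ^ 2)) := by
    simp only [mul_sum, sum_mul]
    exact sum_congr rfl fun i _ => sum_congr rfl fun j _ => by ring
  have hdiag (i : ι) : (if i = N then 1 else 1 / 2 : ℝ) = 1 / 2 + if i = N then 1 / 2 else 0 := by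
    split_ifs <;> norm_num
  calc ∫ w : ι → ℝ, |w N| * (∑ i, ∑ j, A i j * (w i * w j)) * exp (-∑ k, w k ^ 2)
      = ∑ i, ∑ j, A i j * ∫ w : ι → ℝ, |w N| * (w i * w j) * exp (-∑ k, w k ^ 2) := by
        rw [integral_congr_ae (.of_forall hexpand),
          integral_finsetSum _ fun i _ => integrable_finsetSum _ fun j _ => hint i j]
        refine sum_congr rfl fun i _ => ?_
        rw [integral_finsetSum _ fun j _ => hint i j]
        exact sum_congr rfl fun j _ => integral_const_mul _ _
    _ = (∑ i, A i i * (if i = N then 1 else 1 / 2)) * √π ^ (Fintype.card ι - 1) := by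
        simp only [integral_abs_mul_mul_mul_exp_neg_sum_sq, mul_ite, mul_zero, sum_ite_eq,
          mem_univ, if_true, sum_mul]
        exact sum_congr rfl fun i _ => by split_ifs <;> ring
    _ = (A.trace + A N N) / 2 * √π ^ (Fintype.card ι - 1) := by
        simp only [hdiag, mul_add, sum_add_distrib, mul_ite, mul_zero, sum_ite_eq', mem_univ,
          if_true, ← sum_mul, Matrix.trace, Matrix.diag]
        ring

end GaussianMoments

section Polar

variable {E : Type*} [NormedAddCommGroup E] [NormedSpace ℝ E] [FiniteDimensional ℝ E]
  [MeasurableSpace E] [BorelSpace E] [Nontrivial E] (μ : Measure E) [μ.IsAddHaarMeasure]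

theorem integral_eq_integral_toSphere_mul_integral_Ioi (g : Metric.sphere (0 : E) 1 → ℝ)
    (h : ℝ → ℝ) {f : E → ℝ}
    (hf : ∀ (ξ : Metric.sphere (0 : E) 1) (r : ℝ), 0 < r → f (r • (ξ : E)) = g ξ * h r) :
    ∫ y, f y ∂μ =
      (∫ ξ, g ξ ∂μ.toSphere) * ∫ r in Set.Ioi 0, r ^ (Module.finrank ℝ E - 1) * h r := by
  calc ∫ y, f y ∂μ = ∫ y : ({0}ᶜ : Set E), f y ∂(μ.comap (↑)) := by
        rw [integral_subtype_comap (measurableSet_singleton _).compl, restrict_compl_singleton]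
    _ = ∫ p, g p.1 * h p.2 ∂(μ.toSphere.prod (.volumeIoiPow (Module.finrank ℝ E - 1))) := by
        rw [← μ.measurePreserving_homeomorphUnitSphereProd.integral_comp
          (Homeomorph.measurableEmbedding _)]
        refine integral_congr_ae (.of_forall fun y => ?_)
        have hy : 0 < ‖(y : E)‖ := norm_pos_iff.2 y.2
        simp only [← hf _ _ hy, homeomorphUnitSphereProd_apply_fst_coe,
          homeomorphUnitSphereProd_apply_snd_coe, smul_inv_smul₀ hy.ne']
    _ = (∫ ξ, g ξ ∂μ.toSphere) * ∫ r, h r ∂(.volumeIoiPow (Module.finrank ℝ E - 1)) :=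
        integral_prod_mul g (h ∘ Subtype.val)
    _ = _ := by
        simp only [Measure.volumeIoiPow, ENNReal.ofReal]
        rw [integral_withDensity_eq_integral_smul
            (measurable_subtype_coe.pow_const _).real_toNNReal,
          integral_subtype_comap measurableSet_Ioi
            fun r => (r ^ (Module.finrank ℝ E - 1)).toNNReal • h r,
          setIntegral_congr_fun measurableSet_Ioi fun r (hr : 0 < r) => by
            rw [NNReal.smul_def, Real.coe_toNNReal _ (pow_nonneg hr.le _), smul_eq_mul]]

end Polar

section InnerProductSpace

variable {F : Type*} [NormedAddCommGroup F] [InnerProductSpace ℝ F] [FiniteDimensional ℝ F]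

theorem exists_orthonormalBasis_apply_eq {ι : Type*} [Fintype ι]
    (hι : Module.finrank ℝ F = Fintype.card ι) {x : F} (hx : ‖x‖ = 1) (N : ι) :
    ∃ e : OrthonormalBasis ι ℝ F, e N = x := by
  have hx' : Orthonormal ℝ (Set.domRestrict {N} fun _ => x) :=
    ⟨fun _ => hx, fun i j hij => (hij (Subsingleton.elim i j)).elim⟩
  obtain ⟨e, he⟩ := hx'.exists_orthonormalBasis_extension_of_card_eq hι
  exact ⟨e, he N rfl⟩

variable [MeasurableSpace F] [BorelSpace F]

theorem OrthonormalBasis.integral_comp_inner {ι : Type*} [Fintype ι]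
    (b : OrthonormalBasis ι ℝ F) (G : (ι → ℝ) → ℝ) :
    ∫ y, G (fun i => ⟪b i, y⟫) = ∫ z, G z := by
  have h := (b.measurePreserving_measurableEquiv.trans
    (EuclideanSpace.volume_preserving_symm_measurableEquiv_toLp ι)).integral_comp' G
  simp only [OrthonormalBasis.measurableEquiv, MeasurableEquiv.trans_apply] at h
  rw [← h]
  simp_rw [← b.repr_apply_apply]
  rfl

theorem integral_abs_inner_mul_quadratic_mul_exp_neg_norm_sq {x : F} (hx : ‖x‖ = 1) (v : F)
    (a b : ℝ) :
    ∫ y, |⟪x, y⟫| * (a * ⟪v, y⟫ ^ 2 + b * ‖y‖ ^ 2) * exp (-‖y‖ ^ 2) =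
      (a * (‖v‖ ^ 2 + ⟪x, v⟫ ^ 2) + b * (Module.finrank ℝ F + 1)) / 2 *
        √π ^ (Module.finrank ℝ F - 1) := by
  set d := Module.finrank ℝ F
  have hd : 0 < d := Module.finrank_pos_iff_exists_ne_zero.2 ⟨x, norm_ne_zero_iff.1 (by simp [hx])⟩
  set N : Fin d := ⟨0, hd⟩
  obtain ⟨e, heN⟩ := exists_orthonormalBasis_apply_eq (Fintype.card_fin d).symm hx N
  set c : Fin d → ℝ := fun i => ⟪v, e i⟫
  set A : Matrix (Fin d) (Fin d) ℝ := Matrix.of fun i j => a * (c i * c j) + if i = j then b else 0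
  set G : (Fin d → ℝ) → ℝ :=
    fun z => |z N| * (∑ i, ∑ j, A i j * (z i * z j)) * exp (-∑ k, z k ^ 2)
  have hsq (u : F) : ‖u‖ ^ 2 = ∑ i, ⟪e i, u⟫ ^ 2 := by
    rw [← real_inner_self_eq_norm_sq, ← e.sum_inner_mul_inner]
    simp_rw [real_inner_comm u, sq]
  have hcoord (y : F) :
      |⟪x, y⟫| * (a * ⟪v, y⟫ ^ 2 + b * ‖y‖ ^ 2) * exp (-‖y‖ ^ 2) = G fun i => ⟪e i, y⟫ := by
    simp only [G, A, Matrix.of_apply, ← heN, hsq y, ← e.sum_inner_mul_inner v y, sq, sum_mul_sum]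
    simp [c, add_mul, sum_add_distrib, mul_sum, ite_mul, mul_assoc, mul_left_comm]
  have htrace : A.trace = a * ‖v‖ ^ 2 + b * d := by
    simp only [Matrix.trace, Matrix.diag_apply, Matrix.of_apply, A, c, if_pos, sum_add_distrib,
      ← mul_sum, sum_const, card_univ, Fintype.card_fin, nsmul_eq_mul, hsq v, real_inner_comm, sq]
    ring
  have hNN : A N N = a * ⟪x, v⟫ ^ 2 + b := by
    simp [A, c, heN, real_inner_comm, sq]
  calc ∫ y, |⟪x, y⟫| * (a * ⟪v, y⟫ ^ 2 + b * ‖y‖ ^ 2) * exp (-‖y‖ ^ 2)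
      = ∫ y, G fun i => ⟪e i, y⟫ := integral_congr_ae (.of_forall hcoord)
    _ = ∫ z, G z := e.integral_comp_inner G
    _ = (a * (‖v‖ ^ 2 + ⟪x, v⟫ ^ 2) + b * (d + 1)) / 2 * √π ^ (d - 1) := by
      rw [integral_abs_mul_quadratic_mul_exp_neg_sum_sq, htrace, hNN, Fintype.card_fin]
      ring

theorem integral_toSphere_abs_inner_mul_quadratic {x : F} (hx : ‖x‖ = 1) (v : F) (a b : ℝ) :
    ∫ ξ, |⟪x, (ξ : F)⟫| * (a * ⟪v, (ξ : F)⟫ ^ 2 + b) ∂(volume : Measure F).toSphere =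
      (a * (‖v‖ ^ 2 + ⟪x, v⟫ ^ 2) + b * (Module.finrank ℝ F + 1)) *
        √π ^ (Module.finrank ℝ F - 1) / Gamma ((Module.finrank ℝ F + 3) / 2) := by
  have : Nontrivial F := ⟨⟨x, 0, by rintro rfl; simp at hx⟩⟩
  have hpos : 0 < Module.finrank ℝ F := Module.finrank_pos
  have hpolar := integral_eq_integral_toSphere_mul_integral_Ioi volume
    (fun ξ => |⟪x, (ξ : F)⟫| * (a * ⟪v, (ξ : F)⟫ ^ 2 + b)) (fun r => r ^ 3 * exp (-r ^ 2))
    (f := fun y => |⟪x, y⟫| * (a * ⟪v, y⟫ ^ 2 + b * ‖y‖ ^ 2) * exp (-‖y‖ ^ 2))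
    fun ξ r hr => by
      simp only [inner_smul_right, norm_smul, norm_of_nonneg hr.le, norm_eq_of_mem_sphere,
        abs_mul, abs_of_pos hr, mul_one]
      ring
  have hradial : ∫ r in Set.Ioi 0, r ^ (Module.finrank ℝ F - 1) * (r ^ 3 * exp (-r ^ 2)) =
      Gamma ((Module.finrank ℝ F + 3) / 2) / 2 := by
    simp_rw [← mul_assoc, ← pow_add]
    rw [integral_Ioi_pow_mul_exp_neg_sq]
    congr 2
    push_cast [Nat.cast_sub hpos]
    ring
  have hΓ : 0 < Gamma ((Module.finrank ℝ F + 3) / 2) := Gamma_pos_of_pos (by positivity)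
  rw [integral_abs_inner_mul_quadratic_mul_exp_neg_norm_sq hx, hradial] at hpolar
  field_simp
  linarith

end InnerProductSpace

theorem stmt3 (n : ℕ) (hn : 1 ≤ n)
    (x : EuclideanSpace ℝ (Fin n)) (hx : x ∈ Metric.sphere (0 : EuclideanSpace ℝ (Fin n)) 1) :
    x ⟨n - 1, by omega⟩ ^ 2 =
      Real.Gamma ((n + 1) / 2) / (2 * Real.pi ^ ((n - 1 : ℝ) / 2)) *
        ∫ ξ : Metric.sphere (0 : EuclideanSpace ℝ (Fin n)) 1,
          |⟪x, (ξ : EuclideanSpace ℝ (Fin n))⟫| *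
            ((n + 1) * (ξ : EuclideanSpace ℝ (Fin n)) ⟨n - 1, by omega⟩ ^ 2 - 1)
          ∂(volume.toSphere) := by
  set N : Fin n := ⟨n - 1, by omega⟩
  have hsphere := integral_toSphere_abs_inner_mul_quadratic (mem_sphere_zero_iff_norm.1 hx)
    (EuclideanSpace.single N 1) (n + 1) (-1)
  simp only [EuclideanSpace.inner_single_left, EuclideanSpace.inner_single_right,
    PiLp.norm_single, finrank_euclideanSpace_fin, map_one, one_mul, conj_trivial, norm_one,
    one_pow, ← sub_eq_add_neg, neg_one_mul] at hsphere
  have hΓ : Gamma ((n + 3) / 2) = (n + 1) / 2 * Gamma ((n + 1) / 2) := by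
    rw [show ((n : ℝ) + 3) / 2 = (n + 1) / 2 + 1 by ring, Gamma_add_one (by positivity)]
  have hπ : π ^ ((n - 1 : ℝ) / 2) = √π ^ (n - 1) := by
    rw [sqrt_eq_rpow, ← rpow_natCast, ← rpow_mul pi_pos.le, Nat.cast_sub hn]
    ring_nf
  rw [hsphere, hΓ, hπ]
  field_simp
  ring
end

section
/- Let λ > 0 and define g(x,y) = (x^2+y^2)^{1/2} · (1 + λ (x^2 − 2y^2)/(x^2+y^2))^2 for (x,y) ≠ (0,0), g(0,0) = 0. Then g is convex on R^2 if and only if λ ≤ 1/11. -/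
/-!
`g` is positively homogeneous: `g (r cos θ, r sin θ) = r h(θ)` with
`h(θ) = (1 + λ (1 - 3 sin² θ))²`. Such a function is convex iff `h + h'' ≥ 0`, and at `θ = 0`
this reads `(1 + λ)(1 - 11λ) ≥ 0`.

For `λ ≤ 1/11`, `g` is the supremum of its differentials at the unit vectors: that each of them
lies below `g` is a polynomial inequality between two points of the unit circle, which has an
explicit sum-of-squares certificate. For `λ > 1/11`, convexity already fails on the line `x = 1`:
`g (1, 0)` exceeds `g (1, ±tan θ)` for a suitable small `θ`.
-/

open Set

theorem convexOn_of_forall_exists_linearMap_le_eq {𝕜 E β : Type*} [Semiring 𝕜] [PartialOrder 𝕜]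
    [AddCommMonoid E] [Module 𝕜 E] [AddCommMonoid β] [PartialOrder β] [IsOrderedAddMonoid β]
    [Module 𝕜 β] [PosSMulMono 𝕜 β] {s : Set E} {f : E → β} (hs : Convex 𝕜 s)
    (h : ∀ w ∈ s, ∃ ℓ : E →ₗ[𝕜] β, (∀ x ∈ s, ℓ x ≤ f x) ∧ ℓ w = f w) :
    ConvexOn 𝕜 s f := by
  refine ⟨hs, fun x hx y hy a b ha hb hab => ?_⟩
  obtain ⟨ℓ, hℓ, hw⟩ := h _ (hs hx hy ha hb hab)
  rw [← hw, map_add, map_smul, map_smul]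
  exact add_le_add (smul_le_smul_of_nonneg_left (hℓ x hx) ha)
    (smul_le_smul_of_nonneg_left (hℓ y hy) hb)

/-- `g (r • (c, s)) = r * profile lam s` on the unit circle `(c, s) = (cos θ, sin θ)`, and
`profileDeriv lam c s` is the `θ`-derivative of `profile lam (sin θ)`. -/
def profile (lam s : ℝ) : ℝ := (1 + lam * (1 - 3 * s ^ 2)) ^ 2

def profileDeriv (lam c s : ℝ) : ℝ := -12 * lam * (1 + lam * (1 - 3 * s ^ 2)) * c * s

/-- The differential of `g` at `(c, s)`, i.e. `h(θ) e_r + h'(θ) e_θ`. -/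
def tangentFunctional (lam c s : ℝ) : ℝ × ℝ →ₗ[ℝ] ℝ :=
  (c * profile lam s - s * profileDeriv lam c s) • LinearMap.fst ℝ ℝ ℝ
    + (s * profile lam s + c * profileDeriv lam c s) • LinearMap.snd ℝ ℝ ℝ

theorem tangentFunctional_apply (lam c s : ℝ) (p : ℝ × ℝ) :
    tangentFunctional lam c s p =
      p.1 * (c * profile lam s - s * profileDeriv lam c s)
        + p.2 * (s * profile lam s + c * profileDeriv lam c s) := by
  simp only [tangentFunctional, LinearMap.add_apply, LinearMap.smul_apply, LinearMap.fst_apply,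
    LinearMap.snd_apply, smul_eq_mul]
  ring

theorem tangentFunctional_self {lam c s : ℝ} (hcs : c ^ 2 + s ^ 2 = 1) :
    tangentFunctional lam c s (c, s) = profile lam s := by
  rw [tangentFunctional_apply]
  linear_combination profile lam s * hcs

/-- With `(m, n) = (cos α, sin α)` this is `h(θ + α) ≥ h(θ) cos α + h'(θ) sin α`. The defect is
`1 - cos α` times a quantity that is nonnegative as soon as `λ ≤ 1/11`. -/
theorem profile_rotate_ge {lam c s m n : ℝ} (hlam : 0 ≤ lam) (hlam' : lam ≤ 1 / 11)
    (hcs : c ^ 2 + s ^ 2 = 1) (hmn : m ^ 2 + n ^ 2 = 1) :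
    m * profile lam s + n * profileDeriv lam c s ≤ profile lam (s * m + c * n) := by
  set u := 1 + lam * (1 - 3 * s ^ 2)
  have hu : 0 ≤ u := by nlinarith
  have hM : 0 ≤ u - 6 * lam * ((c ^ 2 - s ^ 2) * (1 + m) - 2 * s * c * n) := by
    have hsos : u - 6 * lam * ((c ^ 2 - s ^ 2) * (1 + m) - 2 * s * c * n)
        = (1 - 11 * lam) + 9 * lam * s ^ 2
          + 3 * lam * ((c ^ 2 - s ^ 2 - m) ^ 2 + (2 * s * c + n) ^ 2) := by
      grind
    rw [hsos]
    exact add_nonneg (add_nonneg (by linarith) (by positivity)) (by positivity)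
  have hm : 0 ≤ 1 - m := by nlinarith
  have hm' : 0 ≤ 1 + m := by nlinarith
  have key : profile lam (s * m + c * n) - (m * profile lam s + n * profileDeriv lam c s)
      = (1 - m) * (u * (u - 6 * lam * ((c ^ 2 - s ^ 2) * (1 + m) - 2 * s * c * n))
        + 9 * lam ^ 2 * (1 + m) * (2 * s * c * m + (c ^ 2 - s ^ 2) * n) ^ 2) := by
    simp only [profile, profileDeriv, u]
    grind
  rw [← sub_nonneg, key]
  positivity

theorem tangentFunctional_le_profile {lam c s C S : ℝ} (hlam : 0 ≤ lam) (hlam' : lam ≤ 1 / 11)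
    (hcs : c ^ 2 + s ^ 2 = 1) (hCS : C ^ 2 + S ^ 2 = 1) :
    tangentFunctional lam c s (C, S) ≤ profile lam S := by
  have hS : S = s * (C * c + S * s) + c * (S * c - C * s) := by linear_combination -S * hcs
  have hmn : (C * c + S * s) ^ 2 + (S * c - C * s) ^ 2 = 1 := by
    linear_combination (C ^ 2 + S ^ 2) * hcs + hCS
  calc tangentFunctional lam c s (C, S)
      = (C * c + S * s) * profile lam s + (S * c - C * s) * profileDeriv lam c s := by
        rw [tangentFunctional_apply]; ring
    _ ≤ profile lam S := by
        conv_rhs => rw [hS]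
        exact profile_rotate_ge hlam hlam' hcs hmn

theorem exists_eq_smul_unit (p : ℝ × ℝ) :
    ∃ r c s : ℝ, 0 ≤ r ∧ c ^ 2 + s ^ 2 = 1 ∧ p = r • (c, s) := by
  set z : ℂ := ⟨p.1, p.2⟩
  refine ⟨‖z‖, Real.cos z.arg, Real.sin z.arg, norm_nonneg z, Real.cos_sq_add_sin_sq _, ?_⟩
  ext
  · simp [Complex.norm_mul_cos_arg, z]
  · simp [Complex.norm_mul_sin_arg, z]

section

variable {lam : ℝ} {g : ℝ × ℝ → ℝ}

theorem apply_smul_unit_eq_mul_profile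
    (hg : ∀ p : ℝ × ℝ, p ≠ 0 →
      g p = (p.1 ^ 2 + p.2 ^ 2) ^ ((1 : ℝ) / 2) *
        (1 + lam * (p.1 ^ 2 - 2 * p.2 ^ 2) / (p.1 ^ 2 + p.2 ^ 2)) ^ 2)
    (hg0 : g 0 = 0) {r c s : ℝ} (hr : 0 ≤ r) (hcs : c ^ 2 + s ^ 2 = 1) :
    g (r • (c, s)) = r * profile lam s := by
  rcases hr.eq_or_lt with rfl | hr
  · simp [hg0]
  have hne : r • (c, s) ≠ 0 := by
    refine smul_ne_zero hr.ne' fun h => ?_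
    simp only [Prod.mk_eq_zero] at h
    nlinarith [h.1, h.2]
  have hnorm : (r * c) ^ 2 + (r * s) ^ 2 = r ^ 2 := by linear_combination r ^ 2 * hcs
  rw [hg _ hne, Prod.smul_mk, smul_eq_mul, smul_eq_mul, hnorm, ← Real.sqrt_eq_rpow,
    Real.sqrt_sq hr.le, profile]
  congr 2
  field_simp
  linear_combination lam * hcs

theorem mul_profile_zero_le_of_convexOn
    (hg : ∀ p : ℝ × ℝ, p ≠ 0 →
      g p = (p.1 ^ 2 + p.2 ^ 2) ^ ((1 : ℝ) / 2) *
        (1 + lam * (p.1 ^ 2 - 2 * p.2 ^ 2) / (p.1 ^ 2 + p.2 ^ 2)) ^ 2)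
    (hg0 : g 0 = 0) (hconv : ConvexOn ℝ univ g) {c s : ℝ} (hcs : c ^ 2 + s ^ 2 = 1)
    (hc : 0 < c) :
    c * profile lam 0 ≤ profile lam s := by
  have hup : g (c⁻¹ • (c, s)) = c⁻¹ * profile lam s :=
    apply_smul_unit_eq_mul_profile hg hg0 (inv_nonneg.2 hc.le) hcs
  have hdown : g (c⁻¹ • (c, -s)) = c⁻¹ * profile lam s := by
    rw [apply_smul_unit_eq_mul_profile hg hg0 (inv_nonneg.2 hc.le) (by linear_combination hcs),
      profile, profile, neg_sq]
  have hmid : g ((1 : ℝ) • (1, 0)) = profile lam 0 := by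
    rw [apply_smul_unit_eq_mul_profile hg hg0 zero_le_one (by norm_num), one_mul]
  have hsum : (1 / 2 : ℝ) • (c⁻¹ • (c, s)) + (1 / 2 : ℝ) • (c⁻¹ • (c, -s))
      = (1 : ℝ) • ((1 : ℝ), (0 : ℝ)) := by
    ext <;> norm_num [hc.ne']
  have hconvex := hconv.2 (mem_univ (c⁻¹ • (c, s))) (mem_univ (c⁻¹ • (c, -s)))
    (by norm_num : (0 : ℝ) ≤ 1 / 2) (by norm_num : (0 : ℝ) ≤ 1 / 2) (by norm_num)
  rw [hsum, hmid, hup, hdown, smul_eq_mul] at hconvex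
  calc c * profile lam 0 ≤ c * (c⁻¹ * profile lam s) := by gcongr; linarith
    _ = profile lam s := by field_simp

end

/-- To first order the two sides are `1 - 4γx` and `1 - x`; the witness `x = u / γ` keeps the
second-order term `6u²` below the first-order gap. -/
theorem exists_one_sub_mul_pow_four_lt {γ : ℝ} (hγ : 1 / 4 < γ) :
    ∃ x : ℝ, 0 < x ∧ x < 1 ∧ (1 - γ * x) ^ 4 < 1 - x := by
  have hγ0 : 0 < γ := by linarith
  set u := (4 * γ - 1) / (12 * γ)
  have hu0 : 0 < u := div_pos (by linarith) (by positivity)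
  have hu1 : u < 1 / 3 := by rw [div_lt_iff₀ (by positivity)]; linarith
  have huγ : u < γ := by rw [div_lt_iff₀ (by positivity)]; nlinarith [sq_nonneg (6 * γ - 1)]
  have hinv : 1 / γ < 4 - 6 * u := by
    rw [div_lt_iff₀ hγ0]
    simp only [u]
    field_simp
    linarith
  refine ⟨u / γ, div_pos hu0 hγ0, (div_lt_one hγ0).2 huγ, ?_⟩
  rw [mul_div_cancel₀ _ hγ0.ne', div_eq_mul_one_div]
  nlinarith [mul_lt_mul_of_pos_left hinv hu0,
    mul_nonneg (pow_pos hu0 3).le (by linarith : 0 ≤ 4 - u)]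

theorem exists_profile_lt_mul_profile_zero {lam : ℝ} (hlam : 1 / 11 < lam) :
    ∃ c s : ℝ, c ^ 2 + s ^ 2 = 1 ∧ 0 < c ∧ profile lam s < c * profile lam 0 := by
  obtain ⟨x, hx0, hx1, hlt⟩ :=
    exists_one_sub_mul_pow_four_lt (γ := 3 * lam / (1 + lam)) (by
      rw [lt_div_iff₀ (by linarith)]; linarith)
  refine ⟨√(1 - x), √x, ?_, Real.sqrt_pos.2 (by linarith), ?_⟩
  · rw [Real.sq_sqrt (by linarith), Real.sq_sqrt hx0.le]; ring
  have hprofile : profile lam √x = (1 + lam) ^ 2 * (1 - 3 * lam / (1 + lam) * x) ^ 2 := by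
    rw [profile, Real.sq_sqrt hx0.le]
    field_simp
    ring
  rw [hprofile, show profile lam 0 = (1 + lam) ^ 2 by norm_num [profile], mul_comm √(1 - x)]
  exact mul_lt_mul_of_pos_left (Real.lt_sqrt_of_sq_lt (by convert hlt using 1; ring))
    (by positivity)

theorem stmt5 (lam : ℝ) (hlam : 0 < lam)
    (g : ℝ × ℝ → ℝ)
    (hg : ∀ p : ℝ × ℝ, p ≠ 0 →
      g p = (p.1 ^ 2 + p.2 ^ 2) ^ ((1 : ℝ) / 2) *
        (1 + lam * (p.1 ^ 2 - 2 * p.2 ^ 2) / (p.1 ^ 2 + p.2 ^ 2)) ^ 2)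
    (hg0 : g 0 = 0) :
    ConvexOn ℝ Set.univ g ↔ lam ≤ 1 / 11 := by
  constructor
  · intro hconv
    by_contra! hlt
    obtain ⟨c, s, hcs, hc, hlt'⟩ := exists_profile_lt_mul_profile_zero hlt
    exact (mul_profile_zero_le_of_convexOn hg hg0 hconv hcs hc).not_gt hlt'
  · intro hle
    refine convexOn_of_forall_exists_linearMap_le_eq convex_univ fun w _ => ?_
    obtain ⟨r, c, s, hr, hcs, rfl⟩ := exists_eq_smul_unit w
    refine ⟨tangentFunctional lam c s, fun x _ => ?_, ?_⟩
    · obtain ⟨R, C, S, hR, hCS, rfl⟩ := exists_eq_smul_unit x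
      rw [map_smul, apply_smul_unit_eq_mul_profile hg hg0 hR hCS, smul_eq_mul]
      exact mul_le_mul_of_nonneg_left (tangentFunctional_le_profile hlam.le hle hcs hCS) hR
    · rw [map_smul, apply_smul_unit_eq_mul_profile hg hg0 hr hcs, tangentFunctional_self hcs,
        smul_eq_mul]
end

section
/- For real a, b, x, y with (x,y) ≠ (0,0) and g(x,y) = (x^2+y^2)^{1/2}(1 + λ(x^2−2y^2)/(x^2+y^2))^2, one has a^2 ∂²g/∂x² + 2ab ∂²g/∂x∂y + b^2 ∂²g/∂y² = (x^2+y^2)^{−7/2} (ay − bx)^2 · ( x^4(1 − 10λ − 11λ^2) + x^2 y^2 (2 − 2λ + 104λ^2) + y^4 (1 + 8λ − 20λ^2) ). -/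
/-!
Off the origin, `g = Q ^ (-3/2) * N ^ 2` with the diagonal quadratic forms `Q = x² + y²` and
`N = (1 + λ) x² + (1 - 2λ) y²`. Two applications of the product and chain rules give the second
directional derivative of any `Q ^ s * N ^ 2` in terms of the first and second directional
derivatives of `Q` and `N`; for quadratic forms the latter are linear, resp. constant, and with
`s = -3/2` the claim becomes a polynomial identity after factoring out `Q ^ (-7/2)`.
-/

open ContinuousLinearMap Filter Topology

section RpowMulSq

variable {E : Type*} [NormedAddCommGroup E] [NormedSpace ℝ E] {Q N : E → ℝ} {p : E}

theorem fderiv_rpow_mul_sq_apply (s : ℝ) (v : E) {Q' N' : E →L[ℝ] ℝ} (hQ : HasFDerivAt Q Q' p)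
    (hN : HasFDerivAt N N' p) (hp : 0 < Q p) :
    fderiv ℝ (fun z => Q z ^ s * N z ^ 2) p v =
      Q p ^ (s - 1) * (s * Q' v * N p ^ 2 + 2 * Q p * N p * N' v) := by
  rw [((hQ.rpow_const (.inl hp.ne')).fun_mul (hN.pow 2)).fderiv]
  have hs : Q p ^ s = Q p ^ (s - 1) * Q p := by
    rw [← Real.rpow_add_one hp.ne', sub_add_cancel]
  simp only [add_apply, smul_apply, smul_eq_mul, hs]
  push_cast
  ring

theorem fderiv_fderiv_rpow_mul_sq_apply (s : ℝ) (v : E) {Q' N' : E → E →L[ℝ] ℝ}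
    {q' n' : E →L[ℝ] ℝ} (hQ : ∀ᶠ z in 𝓝 p, HasFDerivAt Q (Q' z) z)
    (hN : ∀ᶠ z in 𝓝 p, HasFDerivAt N (N' z) z) (hq : HasFDerivAt (fun z => Q' z v) q' p)
    (hn : HasFDerivAt (fun z => N' z v) n' p) (hp : 0 < Q p) :
    fderiv ℝ (fun z => fderiv ℝ (fun w => Q w ^ s * N w ^ 2) z v) p v =
      Q p ^ (s - 2) * (s * (s - 1) * Q' p v ^ 2 * N p ^ 2 + s * Q p * q' v * N p ^ 2 +
        4 * s * Q p * Q' p v * N p * N' p v + 2 * Q p ^ 2 * (N' p v ^ 2 + N p * n' v)) := by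
  have hQp := hQ.self_of_nhds
  have hNp := hN.self_of_nhds
  have hpos : ∀ᶠ z in 𝓝 p, 0 < Q z := hQp.continuousAt.eventually (lt_mem_nhds hp)
  have hfirst : (fun z => fderiv ℝ (fun w => Q w ^ s * N w ^ 2) z v) =ᶠ[𝓝 p]
      fun z => Q z ^ (s - 1) * (s * Q' z v * N z ^ 2 + 2 * Q z * N z * N' z v) := by
    filter_upwards [hQ, hN, hpos] with z hQz hNz hz
    exact fderiv_rpow_mul_sq_apply s v hQz hNz hz
  have hR := ((hq.const_mul s).fun_mul (hNp.pow 2)).fun_add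
    (((hQp.const_mul 2).fun_mul hNp).fun_mul hn)
  rw [hfirst.fderiv_eq, ((hQp.rpow_const (.inl hp.ne')).fun_mul hR).fderiv]
  have hs : Q p ^ (s - 1) = Q p ^ (s - 2) * Q p := by
    rw [← Real.rpow_add_one hp.ne']; ring_nf
  have hs' : Q p ^ (s - 1 - 1) = Q p ^ (s - 2) := by ring_nf
  simp only [add_apply, smul_apply, smul_eq_mul, hs, hs']
  push_cast
  ring

end RpowMulSq

def diagQuad (c d : ℝ) (p : ℝ × ℝ) : ℝ := c * p.1 ^ 2 + d * p.2 ^ 2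

theorem diagQuad_pos {c d : ℝ} (hc : 0 < c) (hd : 0 < d) {p : ℝ × ℝ} (hp : p ≠ 0) :
    0 < diagQuad c d p := by
  unfold diagQuad
  rcases eq_or_ne p.1 0 with h1 | h1
  · have h2 : p.2 ≠ 0 := fun h2 => hp (Prod.ext h1 h2)
    positivity
  · positivity

theorem hasFDerivAt_diagQuad (c d : ℝ) (p : ℝ × ℝ) :
    HasFDerivAt (diagQuad c d) ((2 * c * p.1) • fst ℝ ℝ ℝ + (2 * d * p.2) • snd ℝ ℝ ℝ) p := by
  have h1 : HasFDerivAt Prod.fst (fst ℝ ℝ ℝ) p := hasFDerivAt_fst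
  have h2 : HasFDerivAt Prod.snd (snd ℝ ℝ ℝ) p := hasFDerivAt_snd
  refine ((h1.pow 2).const_mul c |>.fun_add ((h2.pow 2).const_mul d)).congr_fderiv ?_
  ext <;> simp <;> ring

theorem hasFDerivAt_diagQuad_fderiv_apply (c d : ℝ) (v p : ℝ × ℝ) :
    HasFDerivAt (fun z : ℝ × ℝ => ((2 * c * z.1) • fst ℝ ℝ ℝ + (2 * d * z.2) • snd ℝ ℝ ℝ) v)
      ((2 * c * v.1) • fst ℝ ℝ ℝ + (2 * d * v.2) • snd ℝ ℝ ℝ) p := by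
  have h1 : HasFDerivAt Prod.fst (fst ℝ ℝ ℝ) p := hasFDerivAt_fst
  have h2 : HasFDerivAt Prod.snd (snd ℝ ℝ ℝ) p := hasFDerivAt_snd
  refine (((h1.const_mul (2 * c)).mul_const v.1).fun_add
    ((h2.const_mul (2 * d)).mul_const v.2)).congr_fderiv ?_
  ext <;> simp <;> ring

noncomputable def gForm (lam : ℝ) (p : ℝ × ℝ) : ℝ :=
  diagQuad 1 1 p ^ (-(3 : ℝ) / 2) * diagQuad (1 + lam) (1 - 2 * lam) p ^ 2

theorem gForm_eq (lam : ℝ) {p : ℝ × ℝ} (hp : p ≠ 0) :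
    gForm lam p = (p.1 ^ 2 + p.2 ^ 2) ^ ((1 : ℝ) / 2) *
      (1 + lam * (p.1 ^ 2 - 2 * p.2 ^ 2) / (p.1 ^ 2 + p.2 ^ 2)) ^ 2 := by
  have hQ := diagQuad_pos one_pos one_pos hp
  unfold gForm diagQuad at *
  simp only [one_mul] at *
  have hB : (p.1 ^ 2 + p.2 ^ 2) ^ ((1 : ℝ) / 2) =
      (p.1 ^ 2 + p.2 ^ 2) ^ (-(3 : ℝ) / 2) * (p.1 ^ 2 + p.2 ^ 2) ^ 2 := by
    rw [← Real.rpow_add_natCast hQ.ne']; norm_num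
  rw [hB]
  field_simp
  ring

theorem fderiv_fderiv_gForm_apply (lam a b x y : ℝ) (hp : (x, y) ≠ (0 : ℝ × ℝ)) :
    fderiv ℝ (fun p => fderiv ℝ (gForm lam) p (a, b)) (x, y) (a, b) =
      (x ^ 2 + y ^ 2) ^ (-(7 : ℝ) / 2) * (a * y - b * x) ^ 2 *
        (x ^ 4 * (1 - 10 * lam - 11 * lam ^ 2) +
          x ^ 2 * y ^ 2 * (2 - 2 * lam + 104 * lam ^ 2) +
          y ^ 4 * (1 + 8 * lam - 20 * lam ^ 2)) := by
  unfold gForm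
  rw [fderiv_fderiv_rpow_mul_sq_apply _ _ (.of_forall (hasFDerivAt_diagQuad 1 1))
      (.of_forall (hasFDerivAt_diagQuad _ _)) (hasFDerivAt_diagQuad_fderiv_apply 1 1 _ _)
      (hasFDerivAt_diagQuad_fderiv_apply _ _ _ _) (diagQuad_pos one_pos one_pos hp)]
  simp only [smul_apply, add_apply, coe_fst', coe_snd', smul_eq_mul, diagQuad]
  norm_num
  ring

/-- The quadratic form `a² ∂²g/∂x² + 2ab ∂²g/∂x∂y + b² ∂²g/∂y²` is the second
directional derivative of `g` along the vector `(a, b)`. -/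
theorem stmt7 (lam : ℝ) (g : ℝ × ℝ → ℝ)
    (hg : ∀ p : ℝ × ℝ, p ≠ 0 →
      g p = (p.1 ^ 2 + p.2 ^ 2) ^ ((1 : ℝ) / 2) *
        (1 + lam * (p.1 ^ 2 - 2 * p.2 ^ 2) / (p.1 ^ 2 + p.2 ^ 2)) ^ 2)
    (a b x y : ℝ) (hxy : (x, y) ≠ (0, 0)) :
    fderiv ℝ (fun p => fderiv ℝ g p (a, b)) (x, y) (a, b) =
      (x ^ 2 + y ^ 2) ^ (-(7 : ℝ) / 2) * (a * y - b * x) ^ 2 *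
        (x ^ 4 * (1 - 10 * lam - 11 * lam ^ 2) +
          x ^ 2 * y ^ 2 * (2 - 2 * lam + 104 * lam ^ 2) +
          y ^ 4 * (1 + 8 * lam - 20 * lam ^ 2)) := by
  have hg_eq : ∀ p : ℝ × ℝ, p ≠ 0 → g =ᶠ[𝓝 p] gForm lam := fun p hp => by
    filter_upwards [isOpen_ne.mem_nhds hp] with z hz
    rw [hg z hz, gForm_eq lam hz]
  have hfirst : (fun p => fderiv ℝ g p (a, b)) =ᶠ[𝓝 (x, y)]
      fun p => fderiv ℝ (gForm lam) p (a, b) := by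
    filter_upwards [isOpen_ne.mem_nhds hxy] with p hp
    rw [(hg_eq p hp).fderiv_eq]
  rw [hfirst.fderiv_eq, fderiv_fderiv_gForm_apply lam a b x y hxy]
end

section
/- Let λ be real. The polynomial P(u,v) = u^2 (1 − 10λ − 11λ^2) + u v (2 − 2λ + 104λ^2) + v^2 (1 + 8λ − 20λ^2) is non-negative for all u, v ≥ 0 if and only if −1/10 ≤ λ ≤ 1/11. -/
theorem stmt8 (lam : ℝ) :
    (∀ u v : ℝ, 0 ≤ u → 0 ≤ v →
        0 ≤ u ^ 2 * (1 - 10 * lam - 11 * lam ^ 2) + u * v * (2 - 2 * lam + 104 * lam ^ 2) +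
          v ^ 2 * (1 + 8 * lam - 20 * lam ^ 2)) ↔
      -1 / 10 ≤ lam ∧ lam ≤ 1 / 11 := by
  constructor
  · intro h
    have h1 := h 1 0 zero_le_one le_rfl
    have h2 := h 0 1 le_rfl zero_le_one
    constructor <;> nlinarith [sq_nonneg lam, sq_nonneg (lam - 1), sq_nonneg (lam + 1)]
  · rintro ⟨h1, h2⟩ u v hu hv
    have c1 : 0 ≤ 1 - 10 * lam - 11 * lam ^ 2 := by nlinarith
    have c2 : 0 ≤ 2 - 2 * lam + 104 * lam ^ 2 := by nlinarith [sq_nonneg lam, sq_nonneg (10 * lam - 1)]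
    have c3 : 0 ≤ 1 + 8 * lam - 20 * lam ^ 2 := by nlinarith
    have := mul_nonneg (mul_nonneg hu hv) c2
    nlinarith [mul_nonneg (sq_nonneg u) c1, mul_nonneg (sq_nonneg v) c3]
end
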